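/- The iterated limit lim_{m→∞} lim_{n→∞} LEL(UJL(n,m)) / (2mn) exists and equals (1/(8π²)) ∫₀^{2π} ∫₀^{2π} [ √(F(x,y) + √(F(x,y)² − 4·H(x,y))) + √(F(x,y) − √(F(x,y)² − 4·H(x,y))) ] dx dy, where F(x,y) = 6 − cos x − cos y and H(x,y) = 7 − 3 cos x − 3 cos y − cos x · cos y. -/

import Mathlib

open scoped Classical

noncomputable section

/-- Vertex set of the Union Jack lattice `UJL(n,m)`: the first summand consists of the
"grid vertices" of the `n × m` toroidal square lattice, the second summand of the
"face vertices" inserted in each face. -/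
abbrev UJLVert (n m : ℕ) : Type := (ZMod n × ZMod m) ⊕ (ZMod n × ZMod m)

/-- Base adjacency relation of the Union Jack lattice (to be symmetrized):
grid vertex `(i,j)` is related to the grid vertices `(i+1,j)` and `(i,j+1)`
(symmetrization yields all four grid neighbours `(i±1,j)`, `(i,j±1)`), and the
grid vertex `(i,j)` is related to the face vertices `(i,j)`, `(i-1,j)`, `(i,j-1)`,
`(i-1,j-1)`, i.e. the face vertex `(k,l)` is adjacent to the grid vertices
`(k,l)`, `(k+1,l)`, `(k,l+1)`, `(k+1,l+1)`. -/
def UJLRel (n m : ℕ) : UJLVert n m → UJLVert n m → Prop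
  | Sum.inl p, Sum.inl q => (q.1 = p.1 + 1 ∧ q.2 = p.2) ∨ (q.1 = p.1 ∧ q.2 = p.2 + 1)
  | Sum.inl p, Sum.inr q =>
      (q.1 = p.1 ∧ q.2 = p.2) ∨ (q.1 = p.1 - 1 ∧ q.2 = p.2) ∨
        (q.1 = p.1 ∧ q.2 = p.2 - 1) ∨ (q.1 = p.1 - 1 ∧ q.2 = p.2 - 1)
  | _, _ => False

/-- The Union Jack lattice `UJL(n,m)` with toroidal boundary condition. -/
def UJL (n m : ℕ) : SimpleGraph (UJLVert n m) := SimpleGraph.fromRel (UJLRel n m)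

/-- `cos α_i` where `α_i = 2 π i / n`. -/
def cosα (n i : ℕ) : ℝ := Real.cos (2 * Real.pi * i / n)

/-- The Laplacian matrix `L(UJL(n,m)) = D(UJL(n,m)) - A(UJL(n,m))`. -/
def laplacianUJL (n m : ℕ) [NeZero n] [NeZero m] :
    Matrix (UJLVert n m) (UJLVert n m) ℝ :=
  Matrix.diagonal (fun v => ((UJL n m).degree v : ℝ)) - (UJL n m).adjMatrix ℝ

/-- The Laplacian-energy-like invariant of `UJL(n,m)` (sum of the square roots of the
eigenvalues of the Laplacian `L(UJL(n,m))`, counted with multiplicity as roots of the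
characteristic polynomial), extended by the junk value `0` when `n = 0` or `m = 0`. -/
def LEL_UJL (n m : ℕ) : ℝ :=
  if h : n = 0 ∨ m = 0 then 0
  else
    haveI : NeZero n := ⟨fun hn => h (Or.inl hn)⟩
    haveI : NeZero m := ⟨fun hm => h (Or.inr hm)⟩
    ((laplacianUJL n m).charpoly.roots.map Real.sqrt).sum

/-! The Union Jack lattice is invariant under the translations of `ZMod n × ZMod m`, so in the
basis of plane waves `v ↦ e(q₁v₁/n + q₂v₂/m)` on the grid and on the face vertices its Laplacian
splits into `nm` blocks of size `2`, one for each `q`. The block of `q` has trace `2F` and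
determinant `4H` at the angles `(2πq₁/n, 2πq₂/m)`, so its eigenvalues are `F ± √(F² − 4H)`, and
`LEL(UJL(n,m))` is a double Riemann sum of the integrand. Both limits are then limits of Riemann
sums of continuous functions. -/

open Finset Polynomial Filter Topology Real Matrix

namespace Matrix

variable {ι p R : Type*} [DecidableEq ι] [Fintype p] [DecidableEq p] [CommRing R]

lemma charmatrix_blockDiagonal [Fintype ι] (M : ι → Matrix p p R) :
    charmatrix (blockDiagonal M) = blockDiagonal fun i => charmatrix (M i) := by
  have hX : (diagonal fun _ => X : Matrix (p × ι) (p × ι) R[X]) =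
      blockDiagonal fun _ => diagonal fun _ => X := by
    rw [blockDiagonal_diagonal]
  simp only [charmatrix, RingHom.mapMatrix_apply, scalar_apply, hX,
    blockDiagonal_map _ _ (map_zero C)]
  exact (blockDiagonal_sub _ _).symm

lemma charpoly_blockDiagonal [Fintype ι] (M : ι → Matrix p p R) :
    (blockDiagonal M).charpoly = ∏ i, (M i).charpoly := by
  rw [charpoly, charmatrix_blockDiagonal, det_blockDiagonal]
  rfl

lemma fromBlocks_diagonal_eq_reindex_blockDiagonal (M : ι → Matrix (Fin 2) (Fin 2) R) :
    fromBlocks (diagonal (M · 0 0)) (diagonal (M · 0 1)) (diagonal (M · 1 0))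
        (diagonal (M · 1 1)) =
      reindex ((finTwoEquiv.prodCongr (Equiv.refl ι)).trans (Equiv.boolProdEquivSum ι))
        ((finTwoEquiv.prodCongr (Equiv.refl ι)).trans (Equiv.boolProdEquivSum ι))
        (blockDiagonal M) := by
  ext (i | i) (j | j) <;> rfl

lemma charpoly_fromBlocks_diagonal [Fintype ι] (M : ι → Matrix (Fin 2) (Fin 2) R) :
    (fromBlocks (diagonal (M · 0 0)) (diagonal (M · 0 1)) (diagonal (M · 1 0))
      (diagonal (M · 1 1))).charpoly = ∏ i, (M i).charpoly := by
  rw [fromBlocks_diagonal_eq_reindex_blockDiagonal, charpoly_reindex, charpoly_blockDiagonal]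

end Matrix

lemma SimpleGraph.lapMatrix_map {V R S : Type*} [Fintype V] [DecidableEq V] (G : SimpleGraph V)
    [DecidableRel G.Adj] [Ring R] [Ring S] (f : R →+* S) :
    (G.lapMatrix R).map f = G.lapMatrix S := by
  ext v w
  by_cases h : v = w <;> simp [lapMatrix, degMatrix, h, adjMatrix_apply, apply_ite f]

lemma Polynomial.quadratic_eq_mul_X_sub_C (t p : ℝ) (h : p ≤ t ^ 2) :
    X ^ 2 - C (2 * t) * X + C p =
      (X - C (t + √(t ^ 2 - p))) * (X - C (t - √(t ^ 2 - p))) := by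
  have hsq := Real.sq_sqrt (sub_nonneg.2 h)
  have hsum : C (2 * t) = C (t + √(t ^ 2 - p)) + C (t - √(t ^ 2 - p)) := by
    rw [← C_add]
    ring_nf
  have hprod : C p = C (t + √(t ^ 2 - p)) * C (t - √(t ^ 2 - p)) := by
    rw [← C_mul]
    congr 1
    nlinarith
  rw [hsum, hprod]
  ring

lemma Polynomial.roots_prod_X_sub_C_mul_X_sub_C {ι R : Type*} [Fintype ι] [CommRing R]
    [IsDomain R] (a b : ι → R) :
    (∏ i, (X - C (a i)) * (X - C (b i))).roots = univ.val.map a + univ.val.map b := by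
  rw [prod_mul_distrib, ← roots_multiset_prod_X_sub_C (univ.val.map a + univ.val.map b),
    Multiset.map_add, Multiset.prod_add, Multiset.map_map, Multiset.map_map]
  rfl

namespace Fintype

variable {Γ M : Type*} [AddCommGroup Γ] [Fintype Γ] [AddCommMonoid M]

lemma sum_ite_sub_mem (S : Finset Γ) (p : Γ) [DecidablePred (· - p ∈ S)] (g : Γ → M) :
    ∑ u, (if u - p ∈ S then g u else 0) = ∑ d ∈ S, g (p + d) := by
  rw [← Equiv.sum_comp (Equiv.addLeft p)]
  simp only [Equiv.coe_addLeft, add_sub_cancel_left]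
  rw [← sum_filter, filter_mem_eq_inter, univ_inter]

lemma sum_ite_sub_mem' (S : Finset Γ) (p : Γ) [DecidablePred (p - · ∈ S)] (g : Γ → M) :
    ∑ u, (if p - u ∈ S then g u else 0) = ∑ d ∈ S, g (p - d) := by
  rw [← Equiv.sum_comp (Equiv.subLeft p)]
  simp only [Equiv.subLeft_apply, sub_sub_cancel]
  rw [← sum_filter, filter_mem_eq_inter, univ_inter]

end Fintype

instance Nat.fact_one_lt_of_two_lt {n : ℕ} [Fact (2 < n)] : Fact (1 < n) :=
  ⟨(Fact.out : 2 < n).trans' one_lt_two⟩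

namespace ZMod

variable {N : ℕ} [NeZero N]

def angle (j : ZMod N) : ℝ := 2 * π * j.val / N

lemma sum_val {M : Type*} [AddCommMonoid M] (f : ℕ → M) :
    ∑ i : ZMod N, f i.val = ∑ j ∈ range N, f j := by
  obtain ⟨k, rfl⟩ := Nat.exists_eq_succ_of_ne_zero (NeZero.ne N)
  exact (sum_range f).symm

lemma stdAddChar_eq_exp (j : ZMod N) : stdAddChar j = Complex.exp (angle j * Complex.I) := by
  conv_lhs => rw [← natCast_zmod_val j, ← Int.cast_natCast, stdAddChar_coe]
  push_cast [angle]
  ring_nf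

lemma stdAddChar_add_stdAddChar_neg (j : ZMod N) :
    stdAddChar j + stdAddChar (-j) = 2 * Real.cos (angle j) := by
  rw [AddChar.map_neg_eq_conj, Complex.add_conj, stdAddChar_eq_exp, Complex.exp_ofReal_mul_I_re]
  push_cast
  rfl

lemma one_add_stdAddChar_neg_mul (j : ZMod N) :
    (1 + stdAddChar (-j)) * (1 + stdAddChar j) = 2 + 2 * Real.cos (angle j) := by
  have hinv : stdAddChar (-j) * stdAddChar j = 1 := by
    rw [← AddChar.map_add_eq_mul, neg_add_cancel, AddChar.map_zero_eq_one]
  rw [← stdAddChar_add_stdAddChar_neg]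
  linear_combination hinv

lemma sum_stdAddChar_mul (t : ZMod N) :
    ∑ i, stdAddChar (t * i) = if t = 0 then (N : ℂ) else 0 := by
  split_ifs with h
  · simp [h, card]
  · simpa using AddChar.sum_eq_zero_of_ne_one (isPrimitive_stdAddChar N h)

end ZMod

lemma abs_riemannSum_sub_integral_le {f : ℝ → ℝ} (hf : Continuous f) {b ε : ℝ} {N : ℕ}
    (hb : 0 ≤ b) (hN : 0 < N)
    (hε : ∀ x ∈ Set.Icc 0 b, ∀ y ∈ Set.Icc 0 b, dist x y ≤ b / N → dist (f x) (f y) ≤ ε) :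
    |b / N * ∑ j ∈ range N, f (b * j / N) - ∫ x in (0 : ℝ)..b, f x| ≤ ε * b := by
  set a : ℕ → ℝ := fun j => b * j / N with ha
  have hN' : (0 : ℝ) < N := Nat.cast_pos.2 hN
  have hstep (j : ℕ) : a (j + 1) - a j = b / N := by
    simp only [ha]
    push_cast
    ring
  have hmem {j : ℕ} (hj : j ≤ N) : a j ∈ Set.Icc 0 b :=
    ⟨by positivity, div_le_of_le_mul₀ hN'.le hb (mul_le_mul_of_nonneg_left (Nat.cast_le.2 hj) hb)⟩
  have hpiece : ∀ j ∈ range N,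
      |b / N * f (a j) - ∫ x in a j..a (j + 1), f x| ≤ ε * (b / N) := by
    intro j hj
    have hj := mem_range.1 hj
    have hle : a j ≤ a (j + 1) := by linarith [hstep j, div_nonneg hb hN'.le]
    have hsub : b / N * f (a j) - ∫ x in a j..a (j + 1), f x =
        ∫ x in a j..a (j + 1), (f (a j) - f x) := by
      rw [intervalIntegral.integral_sub intervalIntegrable_const (hf.intervalIntegrable _ _),
        intervalIntegral.integral_const, smul_eq_mul, hstep j]
    have hbound := intervalIntegral.norm_integral_le_of_norm_le_const (a := a j) (b := a (j + 1))
      (f := fun x => f (a j) - f x) (C := ε)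
    rw [Real.norm_eq_abs, abs_of_nonneg (sub_nonneg.2 hle)] at hbound
    rw [hsub, ← hstep j]
    refine hbound fun x hx => ?_
    rw [Set.uIoc_of_le hle] at hx
    refine hε _ (hmem hj.le) _ ⟨(hmem hj.le).1.trans hx.1.le, hx.2.trans (hmem hj).2⟩ ?_
    rw [Real.dist_eq, abs_sub_comm, abs_of_nonneg (sub_nonneg.2 hx.1.le), ← hstep j]
    linarith [hx.2]
  have hsplit : ∫ x in (0 : ℝ)..b, f x = ∑ j ∈ range N, ∫ x in a j..a (j + 1), f x := by
    rw [intervalIntegral.sum_integral_adjacent_intervals fun k _ => hf.intervalIntegrable _ _]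
    simp [ha, hN'.ne']
  calc |b / N * ∑ j ∈ range N, f (b * j / N) - ∫ x in (0 : ℝ)..b, f x|
      = |∑ j ∈ range N, (b / N * f (a j) - ∫ x in a j..a (j + 1), f x)| := by
        rw [hsplit, sum_sub_distrib, mul_sum]
    _ ≤ ∑ j ∈ range N, ε * (b / N) := (abs_sum_le_sum_abs _ _).trans (sum_le_sum hpiece)
    _ = ε * b := by
        rw [sum_const, card_range, nsmul_eq_mul]
        field_simp

theorem tendsto_riemannSum {f : ℝ → ℝ} (hf : Continuous f) {b : ℝ} (hb : 0 < b) :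
    Tendsto (fun N : ℕ => b / N * ∑ j ∈ range N, f (b * j / N)) atTop
      (𝓝 (∫ x in (0 : ℝ)..b, f x)) := by
  rw [Metric.tendsto_atTop]
  intro ε hε
  obtain ⟨δ, hδ, hfδ⟩ := Metric.uniformContinuousOn_iff_le.1
    (isCompact_Icc.uniformContinuousOn_of_continuous hf.continuousOn) (ε / (2 * b)) (by positivity)
  obtain ⟨N₀, hN₀⟩ := exists_nat_gt (b / δ)
  refine ⟨N₀, fun N hN => ?_⟩
  have hN' : b / δ < N := hN₀.trans_le (Nat.cast_le.2 hN)
  have hNpos : (0 : ℝ) < N := (div_pos hb hδ).trans hN'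
  have hmesh : b / N ≤ δ := (div_le_iff₀ hNpos).2 (by rw [div_lt_iff₀ hδ] at hN'; linarith)
  rw [Real.dist_eq]
  calc _ ≤ ε / (2 * b) * b :=
        abs_riemannSum_sub_integral_le hf hb.le (Nat.cast_pos.1 hNpos)
          fun x hx y hy hxy => hfδ x hx y hy (hxy.trans hmesh)
    _ < ε := by
        field_simp
        linarith

namespace UJL

def F (x y : ℝ) : ℝ := 6 - cos x - cos y

def H (x y : ℝ) : ℝ := 7 - 3 * cos x - 3 * cos y - cos x * cos y

def density (x y : ℝ) : ℝ :=
  √(F x y + √(F x y ^ 2 - 4 * H x y)) + √(F x y - √(F x y ^ 2 - 4 * H x y))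

lemma four_mul_H_le_F_sq (x y : ℝ) : 4 * H x y ≤ F x y ^ 2 := by
  have hx := neg_one_le_cos x
  have hy := neg_one_le_cos y
  unfold F H
  nlinarith [mul_nonneg (neg_le_iff_add_nonneg'.1 hx) (neg_le_iff_add_nonneg'.1 hy),
    mul_nonneg (sub_nonneg.2 (cos_le_one x)) (sub_nonneg.2 (cos_le_one y))]

lemma density_comm (x y : ℝ) : density x y = density y x := by
  simp only [density, F, H]
  ring_nf

lemma continuous_density : Continuous (Function.uncurry density) := by
  unfold Function.uncurry density F H
  fun_prop

def densityIntegral (x : ℝ) : ℝ := ∫ y in (0 : ℝ)..2 * π, density x y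

lemma continuous_densityIntegral : Continuous densityIntegral :=
  intervalIntegral.continuous_parametric_intervalIntegral_of_continuous' continuous_density _ _

variable {n m : ℕ}

def gridSteps : Finset (ZMod n × ZMod m) := {(1, 0), (-1, 0), (0, 1), (0, -1)}

def faceSteps : Finset (ZMod n × ZMod m) := {(0, 0), (-1, 0), (0, -1), (-1, -1)}

lemma adj_inl_inl [Fact (1 < n)] [Fact (1 < m)] (p q : ZMod n × ZMod m) :
    (UJL n m).Adj (.inl p) (.inl q) ↔ q - p ∈ gridSteps := by
  have h1 : (1 : ZMod n) ≠ 0 := one_ne_zero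
  have h2 : (1 : ZMod m) ≠ 0 := one_ne_zero
  obtain ⟨p1, p2⟩ := p
  obtain ⟨q1, q2⟩ := q
  rw [UJL, SimpleGraph.fromRel_adj]
  simp only [UJLRel, gridSteps, mem_insert, mem_singleton, Prod.ext_iff, Prod.mk_sub_mk, ne_eq,
    sub_eq_iff_eq_add]
  grind

lemma adj_inl_inr (p q : ZMod n × ZMod m) :
    (UJL n m).Adj (.inl p) (.inr q) ↔ q - p ∈ faceSteps := by
  obtain ⟨p1, p2⟩ := p
  obtain ⟨q1, q2⟩ := q
  rw [UJL, SimpleGraph.fromRel_adj]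
  simp only [UJLRel, faceSteps, mem_insert, mem_singleton, Prod.ext_iff, Prod.mk_sub_mk, ne_eq,
    sub_eq_iff_eq_add, reduceCtorEq]
  grind

lemma adj_inr_inl (p q : ZMod n × ZMod m) :
    (UJL n m).Adj (.inr p) (.inl q) ↔ p - q ∈ faceSteps := by
  rw [SimpleGraph.adj_comm, adj_inl_inr]

lemma not_adj_inr_inr (p q : ZMod n × ZMod m) : ¬ (UJL n m).Adj (.inr p) (.inr q) := by
  simp [UJL, UJLRel]

section Neighbours

variable {M : Type*} [AddCommMonoid M] [Fact (1 < n)] [Fact (1 < m)]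

lemma sum_neighborFinset_inl (f : UJLVert n m → M) (p : ZMod n × ZMod m) :
    ∑ u ∈ (UJL n m).neighborFinset (.inl p), f u =
      ∑ d ∈ gridSteps, f (.inl (p + d)) + ∑ d ∈ faceSteps, f (.inr (p + d)) := by
  rw [SimpleGraph.neighborFinset_eq_filter, sum_filter, Fintype.sum_sum_type]
  simp only [adj_inl_inl, adj_inl_inr, Fintype.sum_ite_sub_mem]

lemma sum_neighborFinset_inr (f : UJLVert n m → M) (p : ZMod n × ZMod m) :
    ∑ u ∈ (UJL n m).neighborFinset (.inr p), f u = ∑ d ∈ faceSteps, f (.inl (p - d)) := by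
  rw [SimpleGraph.neighborFinset_eq_filter, sum_filter, Fintype.sum_sum_type]
  simp only [adj_inr_inl, not_adj_inr_inr, if_false, sum_const_zero, add_zero,
    Fintype.sum_ite_sub_mem']

lemma sum_faceSteps (f : ZMod n × ZMod m → M) :
    ∑ d ∈ faceSteps, f d = f (0, 0) + f (-1, 0) + f (0, -1) + f (-1, -1) := by
  simp [faceSteps, sum_insert, Prod.ext_iff, add_assoc]

lemma sum_gridSteps [Fact (2 < n)] [Fact (2 < m)] (f : ZMod n × ZMod m → M) :
    ∑ d ∈ gridSteps, f d = f (1, 0) + f (-1, 0) + f (0, 1) + f (0, -1) := by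
  simp [gridSteps, sum_insert, Prod.ext_iff, ZMod.neg_one_ne_one.symm, add_assoc]

end Neighbours

section Laplacian

variable [Fact (2 < n)] [Fact (2 < m)]

lemma lapMatrix_mulVec_inl {R : Type*} [Ring R] (f : UJLVert n m → R) (p : ZMod n × ZMod m) :
    ((UJL n m).lapMatrix R *ᵥ f) (.inl p) =
      8 * f (.inl p) - ∑ d ∈ gridSteps, f (.inl (p + d)) - ∑ d ∈ faceSteps, f (.inr (p + d)) := by
  have hdeg : (UJL n m).degree (.inl p) = 8 := by
    rw [← SimpleGraph.card_neighborFinset_eq_degree, card_eq_sum_ones, sum_neighborFinset_inl,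
      sum_gridSteps, sum_faceSteps]
    rfl
  rw [SimpleGraph.lapMatrix_mulVec_apply, hdeg, sum_neighborFinset_inl, sub_add_eq_sub_sub]
  norm_num

lemma lapMatrix_mulVec_inr {R : Type*} [Ring R] (f : UJLVert n m → R) (p : ZMod n × ZMod m) :
    ((UJL n m).lapMatrix R *ᵥ f) (.inr p) =
      4 * f (.inr p) - ∑ d ∈ faceSteps, f (.inl (p - d)) := by
  have hdeg : (UJL n m).degree (.inr p) = 4 := by
    rw [← SimpleGraph.card_neighborFinset_eq_degree, card_eq_sum_ones, sum_neighborFinset_inr,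
      sum_faceSteps]
  rw [SimpleGraph.lapMatrix_mulVec_apply, hdeg, sum_neighborFinset_inr]
  norm_num

end Laplacian

section Fourier

variable [NeZero n] [NeZero m]

def fourierChar (q v : ZMod n × ZMod m) : ℂ :=
  ZMod.stdAddChar (q.1 * v.1) * ZMod.stdAddChar (q.2 * v.2)

lemma fourierChar_comm (q v : ZMod n × ZMod m) : fourierChar q v = fourierChar v q := by
  simp only [fourierChar, mul_comm]

lemma fourierChar_add (q v w : ZMod n × ZMod m) :
    fourierChar q (v + w) = fourierChar q v * fourierChar q w := by
  simp only [fourierChar, Prod.fst_add, Prod.snd_add, mul_add, AddChar.map_add_eq_mul]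
  ring

lemma fourierChar_sub (q v w : ZMod n × ZMod m) :
    fourierChar q (v - w) = fourierChar q v * fourierChar q (-w) := by
  rw [sub_eq_add_neg, fourierChar_add]

lemma sum_fourierChar (q : ZMod n × ZMod m) :
    ∑ v, fourierChar q v = if q = 0 then (n * m : ℂ) else 0 := by
  rw [Fintype.sum_prod_type]
  simp only [fourierChar, ← mul_sum, ← sum_mul, ZMod.sum_stdAddChar_mul, Prod.ext_iff]
  split_ifs <;> simp_all

def fourierMatrix : Matrix (ZMod n × ZMod m) (ZMod n × ZMod m) ℂ := of fourierChar

lemma fourierMatrix_mul_conj :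
    fourierMatrix * of (fun q w => fourierChar q (-w)) =
      (n * m : ℂ) • (1 : Matrix (ZMod n × ZMod m) (ZMod n × ZMod m) ℂ) := by
  ext v w
  simp only [fourierMatrix, mul_apply, of_apply, Matrix.smul_apply, one_apply, smul_eq_mul,
    mul_ite, mul_one, mul_zero]
  simp_rw [fourierChar_comm v, ← fourierChar_add, fourierChar_comm _ (v + -w), ← sub_eq_add_neg,
    sum_fourierChar, sub_eq_zero]

lemma isUnit_fourierMatrix : IsUnit (fourierMatrix : Matrix (ZMod n × ZMod m) _ ℂ) := by
  have hnm : (n * m : ℂ) ≠ 0 := by simp [NeZero.ne]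
  refine (isUnit_iff_isUnit_det _).2 (isUnit_det_of_right_inverse
    (B := (n * m : ℂ)⁻¹ • of fun q w => fourierChar q (-w)) ?_)
  rw [Matrix.mul_smul, fourierMatrix_mul_conj, smul_smul, inv_mul_cancel₀ hnm, one_smul]

def fourierBlocks : Matrix (UJLVert n m) (UJLVert n m) ℂ :=
  fromBlocks fourierMatrix 0 0 fourierMatrix

def gridWave (q : ZMod n × ZMod m) : UJLVert n m → ℂ := Sum.elim (fourierChar q) 0

def faceWave (q : ZMod n × ZMod m) : UJLVert n m → ℂ := Sum.elim 0 (fourierChar q)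

lemma fourierBlocks_col_inl (q : ZMod n × ZMod m) :
    (fun z => fourierBlocks z (.inl q)) = gridWave q := by
  ext (p | p) <;> simp [fourierBlocks, gridWave, fourierMatrix, fourierChar_comm p]

lemma fourierBlocks_col_inr (q : ZMod n × ZMod m) :
    (fun z => fourierBlocks z (.inr q)) = faceWave q := by
  ext (p | p) <;> simp [fourierBlocks, faceWave, fourierMatrix, fourierChar_comm p]

def symbol (q : ZMod n × ZMod m) : Matrix (Fin 2) (Fin 2) ℂ :=
  !![8 - ∑ d ∈ gridSteps, fourierChar q d, -∑ d ∈ faceSteps, fourierChar q d;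
    -∑ d ∈ faceSteps, fourierChar q (-d), 4]

end Fourier

variable [Fact (2 < n)] [Fact (2 < m)]

lemma lapMatrix_mulVec_gridWave (q : ZMod n × ZMod m) :
    (UJL n m).lapMatrix ℂ *ᵥ gridWave q =
      symbol q 0 0 • gridWave q + symbol q 1 0 • faceWave q := by
  ext (p | p) <;>
    simp only [lapMatrix_mulVec_inl, lapMatrix_mulVec_inr, gridWave, faceWave, symbol,
      Sum.elim_inl, Sum.elim_inr, Pi.zero_apply, fourierChar_add, fourierChar_sub, ← mul_sum,
      sum_const_zero, Pi.add_apply, Pi.smul_apply, smul_eq_mul, of_apply, cons_val', cons_val_zero,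
      cons_val_one, cons_val_fin_one] <;>
    ring

lemma lapMatrix_mulVec_faceWave (q : ZMod n × ZMod m) :
    (UJL n m).lapMatrix ℂ *ᵥ faceWave q =
      symbol q 0 1 • gridWave q + symbol q 1 1 • faceWave q := by
  ext (p | p) <;>
    simp only [lapMatrix_mulVec_inl, lapMatrix_mulVec_inr, gridWave, faceWave, symbol,
      Sum.elim_inl, Sum.elim_inr, Pi.zero_apply, fourierChar_add, ← mul_sum,
      sum_const_zero, Pi.add_apply, Pi.smul_apply, smul_eq_mul, of_apply, cons_val', cons_val_zero,
      cons_val_one, cons_val_fin_one] <;>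
    ring

lemma lapMatrix_mul_fourierBlocks :
    (UJL n m).lapMatrix ℂ * fourierBlocks = fourierBlocks * fromBlocks (diagonal (symbol · 0 0))
      (diagonal (symbol · 0 1)) (diagonal (symbol · 1 0)) (diagonal (symbol · 1 1)) := by
  ext x (q | q)
  · change ((UJL n m).lapMatrix ℂ *ᵥ fun z => fourierBlocks z (.inl q)) x = _
    rw [fourierBlocks_col_inl, lapMatrix_mulVec_gridWave, ← fourierBlocks_col_inl,
      ← fourierBlocks_col_inr]
    rcases x with p | p <;> simp [fourierBlocks, fromBlocks_multiply, mul_comm]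
  · change ((UJL n m).lapMatrix ℂ *ᵥ fun z => fourierBlocks z (.inr q)) x = _
    rw [fourierBlocks_col_inr, lapMatrix_mulVec_faceWave, ← fourierBlocks_col_inl,
      ← fourierBlocks_col_inr]
    rcases x with p | p <;> simp [fourierBlocks, fromBlocks_multiply, mul_comm]

lemma charpoly_lapMatrix :
    ((UJL n m).lapMatrix ℂ).charpoly = ∏ q : ZMod n × ZMod m, (symbol q).charpoly := by
  have hP : IsUnit (fourierBlocks (n := n) (m := m)).det := (isUnit_iff_isUnit_det _).1
    (isUnit_fromBlocks_zero₂₁.2 ⟨isUnit_fourierMatrix, isUnit_fourierMatrix⟩)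
  have hconj : (UJL n m).lapMatrix ℂ = fourierBlocks * fromBlocks (diagonal (symbol · 0 0))
      (diagonal (symbol · 0 1)) (diagonal (symbol · 1 0)) (diagonal (symbol · 1 1)) *
        fourierBlocks⁻¹ := by
    rw [← lapMatrix_mul_fourierBlocks, Matrix.mul_assoc, mul_nonsing_inv _ hP, Matrix.mul_one]
  rw [hconj, charpoly_mul_comm, ← Matrix.mul_assoc, nonsing_inv_mul _ hP, Matrix.one_mul,
    charpoly_fromBlocks_diagonal]

lemma sum_gridSteps_fourierChar (q : ZMod n × ZMod m) :
    ∑ d ∈ gridSteps, fourierChar q d = 2 * cos (ZMod.angle q.1) + 2 * cos (ZMod.angle q.2) := by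
  rw [sum_gridSteps, ← ZMod.stdAddChar_add_stdAddChar_neg, ← ZMod.stdAddChar_add_stdAddChar_neg]
  simp only [fourierChar, mul_one, mul_zero, AddChar.map_zero_eq_one, mul_neg, one_mul]
  ring

lemma sum_faceSteps_fourierChar_mul (q : ZMod n × ZMod m) :
    (∑ d ∈ faceSteps, fourierChar q d) * ∑ d ∈ faceSteps, fourierChar q (-d) =
      (2 + 2 * cos (ZMod.angle q.1)) * (2 + 2 * cos (ZMod.angle q.2)) := by
  rw [sum_faceSteps, sum_faceSteps, ← ZMod.one_add_stdAddChar_neg_mul,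
    ← ZMod.one_add_stdAddChar_neg_mul]
  simp only [fourierChar, mul_zero, AddChar.map_zero_eq_one, mul_one, mul_neg, one_mul,
    Prod.neg_mk, neg_zero, neg_neg]
  ring

lemma charpoly_symbol (q : ZMod n × ZMod m) :
    (symbol q).charpoly = (X ^ 2 - C (2 * F (ZMod.angle q.1) (ZMod.angle q.2)) * X +
      C (4 * H (ZMod.angle q.1) (ZMod.angle q.2))).map Complex.ofRealHom := by
  have htrace : (symbol q).trace = (2 * F (ZMod.angle q.1) (ZMod.angle q.2) : ℝ) := by
    rw [trace_fin_two]
    simp only [symbol, sum_gridSteps_fourierChar, F, of_apply, cons_val', cons_val_zero,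
      cons_val_one, cons_val_fin_one]
    push_cast
    ring
  have hdet : (symbol q).det = (4 * H (ZMod.angle q.1) (ZMod.angle q.2) : ℝ) := by
    rw [det_fin_two]
    simp only [symbol, sum_gridSteps_fourierChar, sum_faceSteps_fourierChar_mul, H, of_apply,
      cons_val', cons_val_zero, cons_val_one, cons_val_fin_one, neg_mul_neg]
    push_cast
    ring
  rw [charpoly_fin_two, htrace, hdet]
  simp

lemma charpoly_laplacianUJL :
    (laplacianUJL n m).charpoly = ∏ q : ZMod n × ZMod m,
      (X ^ 2 - C (2 * F (ZMod.angle q.1) (ZMod.angle q.2)) * X +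
        C (4 * H (ZMod.angle q.1) (ZMod.angle q.2))) := by
  apply map_injective Complex.ofRealHom Complex.ofReal_injective
  rw [← charpoly_map, show laplacianUJL n m = (UJL n m).lapMatrix ℝ from rfl,
    SimpleGraph.lapMatrix_map, charpoly_lapMatrix, Polynomial.map_prod]
  exact prod_congr rfl fun q _ => charpoly_symbol q

lemma LEL_UJL_eq_sum :
    LEL_UJL n m = ∑ q : ZMod n × ZMod m, density (ZMod.angle q.1) (ZMod.angle q.2) := by
  rw [LEL_UJL, dif_neg (by simp [NeZero.ne]), charpoly_laplacianUJL,
    prod_congr rfl fun q _ => quadratic_eq_mul_X_sub_C _ _ (four_mul_H_le_F_sq _ _),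
    roots_prod_X_sub_C_mul_X_sub_C, Multiset.map_add, Multiset.sum_add, Multiset.map_map,
    Multiset.map_map]
  exact sum_add_distrib.symm

lemma LEL_UJL_eq_sum_range :
    LEL_UJL n m = ∑ k ∈ range m, ∑ j ∈ range n, density (2 * π * k / m) (2 * π * j / n) := by
  -- `n` indexes the inner limit, which has to become the inner integral `∫ y` of the statement
  rw [LEL_UJL_eq_sum, Fintype.sum_prod_type_right, ← ZMod.sum_val]
  refine sum_congr rfl fun b _ => ?_
  rw [← ZMod.sum_val]
  exact sum_congr rfl fun a _ => density_comm _ _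

end UJL

open UJL in
lemma tendsto_LEL_UJL_div_atTop {m : ℕ} (hm : 2 < m) :
    Tendsto (fun n : ℕ => LEL_UJL n m / (2 * m * n)) atTop
      (𝓝 (1 / (4 * π * m) * ∑ k ∈ range m, densityIntegral (2 * π * k / m))) := by
  have : Fact (2 < m) := ⟨hm⟩
  have hrows := tendsto_finsetSum (range m) fun k _ =>
    tendsto_riemannSum (continuous_density.uncurry_left (2 * π * k / m)) two_pi_pos
  refine (hrows.const_mul (1 / (4 * π * m))).congr' ?_
  filter_upwards [eventually_gt_atTop 2] with n hn
  have : Fact (2 < n) := ⟨hn⟩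
  rw [LEL_UJL_eq_sum_range, ← mul_sum]
  field_simp
  ring

open UJL in
lemma tendsto_riemannSum_densityIntegral :
    Tendsto (fun m : ℕ => 1 / (4 * π * m) * ∑ k ∈ range m, densityIntegral (2 * π * k / m))
      atTop (𝓝 (1 / (8 * π ^ 2) * ∫ x in (0 : ℝ)..2 * π, densityIntegral x)) := by
  refine ((tendsto_riemannSum continuous_densityIntegral two_pi_pos).const_mul _).congr' ?_
  filter_upwards [eventually_gt_atTop 0] with m hm
  field_simp
  ring

/-- The iterated limit `lim_{m→∞} lim_{n→∞} LEL(UJL(n,m))/(2mn)` exists and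
equals `(1/(8π²)) ∫₀^{2π} ∫₀^{2π} (√(F + √(F² − 4H)) + √(F − √(F² − 4H))) dx dy`, where
`F(x,y) = 6 − cos x − cos y` and `H(x,y) = 7 − 3cos x − 3cos y − cos x · cos y`. -/
theorem LEL_UJL_asymptotics :
    ∃ L : ℕ → ℝ,
      (∀ m : ℕ, 3 ≤ m →
        Filter.Tendsto (fun n : ℕ => LEL_UJL n m / (2 * (m : ℝ) * (n : ℝ)))
          Filter.atTop (nhds (L m))) ∧
      Filter.Tendsto L Filter.atTop (nhds
        ((1 / (8 * Real.pi ^ 2)) *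
          ∫ x in (0 : ℝ)..(2 * Real.pi), ∫ y in (0 : ℝ)..(2 * Real.pi),
            (Real.sqrt ((6 - Real.cos x - Real.cos y) +
                Real.sqrt ((6 - Real.cos x - Real.cos y) ^ 2 -
                  4 * (7 - 3 * Real.cos x - 3 * Real.cos y - Real.cos x * Real.cos y))) +
              Real.sqrt ((6 - Real.cos x - Real.cos y) -
                Real.sqrt ((6 - Real.cos x - Real.cos y) ^ 2 -
                  4 * (7 - 3 * Real.cos x - 3 * Real.cos y - Real.cos x * Real.cos y)))))) :=
  ⟨_, fun _ hm => tendsto_LEL_UJL_div_atTop hm, tendsto_riemannSum_densityIntegral⟩
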